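/- For the state discrimination problem between two density operators ρ₀ and ρ₁ given with equal prior probability 1/2, the optimal success probability over all two-outcome POVMs {E₀, E₁} satisfies max_{E₀+E₁=I, E_i ≥ 0} (1/2)(Tr ρ₀E₀ + Tr ρ₁E₁) = 1/2 + (1/4)‖ρ₀ − ρ₁‖₁. -/

import Mathlib

open Matrix
open scoped Matrix ComplexOrder

noncomputable section

/-- The trace norm `‖M‖₁ = Tr √(MᴴM)` of a complex matrix. -/
def traceNorm {n : Type*} [Fintype n] [DecidableEq n] (M : Matrix n n ℂ) : ℝ :=
  (((Matrix.posSemidef_conjTranspose_mul_self M).1.eigenvectorUnitary : Matrix n n ℂ) *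
    diagonal (((↑) : ℝ → ℂ) ∘ Real.sqrt ∘ (Matrix.posSemidef_conjTranspose_mul_self M).1.eigenvalues) *
    (star (Matrix.posSemidef_conjTranspose_mul_self M).1.eigenvectorUnitary : Matrix n n ℂ)).trace.re

/-!
With `Δ = ρ₀ - ρ₁` and `E₁ = 1 - E₀`, the success probability is `1/2 + (1/2) Re Tr(Δ E₀)`.
Splitting `Δ = Δ⁺ - Δ⁻` into positive and negative parts gives
`Tr(Δ E) = Tr Δ⁺ - Tr(Δ⁺ (1 - E)) - Tr(Δ⁻ E) ≤ Tr Δ⁺` for `0 ≤ E ≤ 1`, with equality for the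
projection onto the positive eigenspace of `Δ`. Finally `Tr Δ⁺ + Tr Δ⁻ = Tr |Δ| = ‖Δ‖₁` and
`Tr Δ⁺ - Tr Δ⁻ = Tr Δ = 0`, so `Tr Δ⁺ = ‖Δ‖₁ / 2`.
-/

open scoped MatrixOrder

namespace Matrix

lemma trace_mul_add_trace_mul_of_add_eq_one {n R : Type*} [Fintype n] [DecidableEq n] [Ring R]
    {ρ₀ ρ₁ E₀ E₁ : Matrix n n R} (hE : E₀ + E₁ = 1) :
    (ρ₀ * E₀).trace + (ρ₁ * E₁).trace = ρ₁.trace + ((ρ₀ - ρ₁) * E₀).trace := by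
  rw [eq_sub_of_add_eq' hE, sub_mul, mul_sub, mul_one, trace_sub, trace_sub]
  abel

variable {𝕜 n : Type*} [RCLike 𝕜] [Fintype n] [DecidableEq n]

lemma trace_mul_nonneg {A B : Matrix n n 𝕜} (hA : 0 ≤ A) (hB : 0 ≤ B) :
    0 ≤ (A * B).trace := by
  obtain ⟨S, rfl⟩ := CStarAlgebra.nonneg_iff_eq_star_mul_self.mp hA
  rw [mul_assoc, trace_mul_comm]
  exact (star_right_conjugate_nonneg hB S).posSemidef.trace_nonneg

lemma trace_mul_le_trace_posPart {A E : Matrix n n 𝕜} (hA : IsSelfAdjoint A)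
    (hE₀ : 0 ≤ E) (hE₁ : E ≤ 1) : (A * E).trace ≤ A⁺.trace := by
  have hsplit : (A * E).trace = A⁺.trace - ((A⁺ * (1 - E)).trace + (A⁻ * E).trace) := by
    conv_lhs => rw [← CFC.posPart_sub_negPart A]
    simp only [sub_mul, mul_sub, mul_one, trace_sub]
    abel
  rw [hsplit]
  exact sub_le_self _ (add_nonneg (trace_mul_nonneg (CFC.posPart_nonneg A) (sub_nonneg.mpr hE₁))
    (trace_mul_nonneg (CFC.negPart_nonneg A) hE₀))

lemma mul_cfc_indicator_pos {A : Matrix n n 𝕜} (hA : IsSelfAdjoint A) :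
    A * cfc (fun t : ℝ => if 0 < t then 1 else 0) A = A⁺ := by
  have hcont (f : ℝ → ℝ) : ContinuousOn f (spectrum ℝ A) :=
    (finite_real_spectrum (A := A)).continuousOn f
  conv_lhs => arg 1; rw [← cfc_id' ℝ A]
  rw [CFC.posPart_def, cfcₙ_eq_cfc, ← cfc_mul _ _ A (hcont _) (hcont _)]
  refine cfc_congr fun t _ => ?_
  split_ifs with ht
  · simp [ht.le]
  · simp [not_lt.mp ht]

lemma isGreatest_re_trace_mul_image_Icc {A : Matrix n n 𝕜} (hA : IsSelfAdjoint A) :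
    IsGreatest ((fun E => RCLike.re (A * E).trace) '' Set.Icc 0 1) (RCLike.re A⁺.trace) := by
  refine ⟨⟨cfc (fun t : ℝ => if 0 < t then 1 else 0) A, ⟨?_, ?_⟩, ?_⟩, ?_⟩
  · exact cfc_nonneg fun t _ => by split_ifs <;> norm_num
  · exact cfc_le_one _ _ fun t _ => by split_ifs <;> norm_num
  · simp only [mul_cfc_indicator_pos hA]
  · rintro _ ⟨E, ⟨hE₀, hE₁⟩, rfl⟩
    exact RCLike.re_le_re (trace_mul_le_trace_posPart hA hE₀ hE₁)

end Matrix

lemma traceNorm_eq_re_trace_abs {n : Type*} [Fintype n] [DecidableEq n] (M : Matrix n n ℂ) :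
    traceNorm M = (CFC.abs M).trace.re := by
  rw [traceNorm, CFC.abs, CFC.sqrt_eq_real_sqrt _ (star_mul_self_nonneg M), cfcₙ_eq_cfc,
    show star M * M = Mᴴ * M from rfl, (posSemidef_conjTranspose_mul_self M).1.cfc_eq]
  rfl

lemma re_trace_posPart_eq_half_traceNorm {n : Type*} [Fintype n] [DecidableEq n]
    {A : Matrix n n ℂ} (hA : IsSelfAdjoint A) (htr : A.trace = 0) :
    A⁺.trace.re = traceNorm A / 2 := by
  have hdiff : A⁺.trace.re - A⁻.trace.re = 0 := by
    rw [← Complex.sub_re, ← trace_sub, CFC.posPart_sub_negPart A, htr, Complex.zero_re]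
  have hsum : A⁺.trace.re + A⁻.trace.re = traceNorm A := by
    rw [traceNorm_eq_re_trace_abs, ← CFC.posPart_add_negPart A, trace_add, Complex.add_re]
  linarith

/-- Optimal success probability of discriminating two equiprobable
density matrices: `max (1/2)(Tr ρ₀E₀ + Tr ρ₁E₁) = 1/2 + (1/4)‖ρ₀ - ρ₁‖₁`, the maximum
being over two-outcome POVMs `{E₀, E₁}`. -/
theorem optimal_state_discrimination (d : ℕ)
    (ρ₀ ρ₁ : Matrix (Fin d) (Fin d) ℂ)
    (h₀ : ρ₀.PosSemidef) (h₁ : ρ₁.PosSemidef)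
    (ht₀ : ρ₀.trace = 1) (ht₁ : ρ₁.trace = 1) :
    IsGreatest
      {x : ℝ | ∃ E₀ E₁ : Matrix (Fin d) (Fin d) ℂ,
        E₀.PosSemidef ∧ E₁.PosSemidef ∧ E₀ + E₁ = 1 ∧
        x = (1 / 2) * ((ρ₀ * E₀).trace + (ρ₁ * E₁).trace).re}
      (1 / 2 + (1 / 4) * traceNorm (ρ₀ - ρ₁)) := by
  have hΔ : IsSelfAdjoint (ρ₀ - ρ₁) := h₀.1.sub h₁.1
  have hsuccess {E₀ E₁ : Matrix (Fin d) (Fin d) ℂ} (hE : E₀ + E₁ = 1) :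
      (1 / 2) * ((ρ₀ * E₀).trace + (ρ₁ * E₁).trace).re =
        1 / 2 + (1 / 2) * ((ρ₀ - ρ₁) * E₀).trace.re := by
    rw [trace_mul_add_trace_mul_of_add_eq_one hE, ht₁, Complex.add_re, Complex.one_re]
    ring
  obtain ⟨⟨P, ⟨hP₀, hP₁⟩, hP⟩, hmax⟩ := isGreatest_re_trace_mul_image_Icc hΔ
  simp only [RCLike.re_to_complex] at hP hmax
  rw [re_trace_posPart_eq_half_traceNorm hΔ (by rw [trace_sub, ht₀, ht₁, sub_self])] at hP hmax
  refine ⟨⟨P, 1 - P, hP₀.posSemidef, hP₁, add_sub_cancel P 1, ?_⟩, ?_⟩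
  · rw [hsuccess (add_sub_cancel P 1), hP]
    ring
  · rintro _ ⟨E₀, E₁, hE₀, hE₁, hE, rfl⟩
    have hbound := hmax ⟨E₀, ⟨hE₀.nonneg, le_iff.mpr (eq_sub_of_add_eq' hE ▸ hE₁)⟩, rfl⟩
    rw [hsuccess hE]
    linarith
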